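/- Let L > 1, let m ≥ 0 and n ≥ 1 be integers, and let C > 0, α > 0. Let t₀, t₁, …, t_n : Λ × Λ → ℂ be measurable with |t_i(x,x')| ≤ C e^{−α|x−x'|} for all (x,x') ∈ Λ × Λ and each i. Define d_{m,n}(L) := ∫_Λ dx ∫_Λ dy₁ ⋯ ∫_Λ dy_n (i · fl_n(x,y₁,…,y_n))^m · t₀(x,y₁) t₁(y₁,y₂) ⋯ t_{n−1}(y_{n−1},y_n) t_n(y_n,x). Then there exists a constant K > 0 depending only on C, α, m and n (independent of L and of the particular kernels t_i) such that |d_{m,n}(L)| ≤ K L³. -/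

import Mathlib

open MeasureTheory Real

noncomputable section

/-- The open cube `Λ = (−L/2, L/2)³ ⊂ ℝ³`. -/
def cube (L : ℝ) : Set (EuclideanSpace ℝ (Fin 3)) :=
  {x | ∀ i, x i ∈ Set.Ioo (-(L / 2)) (L / 2)}

/-- The magnetic phase `φ(x,x') = (x₂x₁' − x₁x₂')/2`. -/
def phi (x x' : EuclideanSpace ℝ (Fin 3)) : ℝ := (x 1 * x' 0 - x 0 * x' 1) / 2

/-- The closed-polygon phase sum `fl_{n+1}(x,y₁,…,y_{n+1})`, where the `n+1`
points `y₁,…,y_{n+1}` are encoded as `y : Fin (n+1) → ℝ³`: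
`fl_{n+1} = φ(x,y₁) + φ(y₁,y₂) + ⋯ + φ(y_n,y_{n+1}) + φ(y_{n+1},x)`. -/
def fln (n : ℕ) (x : EuclideanSpace ℝ (Fin 3))
    (y : Fin (n + 1) → EuclideanSpace ℝ (Fin 3)) : ℝ :=
  phi x (y 0) + (∑ k : Fin n, phi (y k.castSucc) (y k.succ)) + phi (y (Fin.last n)) x

/-!
Translating every point by `-x` leaves the closed-polygon phase unchanged, so
`fl = ∑ₖ φ(yₖ - x, yₖ₊₁ - x)` and `|fl| ≤ T²` with `T = ∑ᵢ |yᵢ - x|`. Each `|yᵢ - x|` is at most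
the length `S` of the path `x → y₁ → ⋯ → yₙ`, so `T ≤ n S`, while the kernels along that path
decay like `Cⁿ⁺¹ e^{-α S}`. With `β = α / n`, the factor `T^{2m}` is absorbed by half of
`e^{-β T}`, leaving an integrand dominated by `∏ᵢ e^{-β |yᵢ - x| / 2}`, whose integral over
`(ℝ³)ⁿ` is finite and independent of `x`; integrating over `x ∈ Λ` then costs `|Λ| = L³`.
-/

theorem Fin.sum_succ_sub_castSucc {M : Type*} [AddCommGroup M] :
    ∀ {n : ℕ} (f : Fin (n + 1) → M), ∑ k : Fin n, (f k.succ - f k.castSucc) = f (Fin.last n) - f 0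
  | 0, _ => by simp
  | n + 1, f => by
    rw [Fin.sum_univ_castSucc]
    simp only [Fin.succ_castSucc]
    have ih := Fin.sum_succ_sub_castSucc (f ∘ Fin.castSucc)
    simp only [Function.comp_apply] at ih
    rw [ih, Fin.succ_last, Fin.castSucc_zero]
    abel

section Chain

variable {E : Type*} [SeminormedAddCommGroup E]

theorem norm_sub_zero_le_sum_norm_sub :
    ∀ {n : ℕ} (z : Fin (n + 1) → E) (i : Fin (n + 1)),
      ‖z i - z 0‖ ≤ ∑ k : Fin n, ‖z k.succ - z k.castSucc‖
  | 0, z, i => by simp [Fin.fin_one_eq_zero i]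
  | n + 1, z, i => by
    have ih := norm_sub_zero_le_sum_norm_sub (z ∘ Fin.castSucc)
    simp only [Function.comp_apply, Fin.castSucc_zero] at ih
    rw [Fin.sum_univ_castSucc]
    induction i using Fin.lastCases with
    | last =>
      calc ‖z (Fin.last (n + 1)) - z 0‖
          ≤ ‖z (Fin.last n).castSucc - z 0‖ + ‖z (Fin.last (n + 1)) - z (Fin.last n).castSucc‖ :=
            norm_sub_le_norm_sub_add_norm_sub _ _ _ |>.trans_eq (add_comm _ _)
        _ ≤ _ := by rw [← Fin.succ_last]; gcongr; exact ih _
    | cast j => exact (ih j).trans (le_add_of_nonneg_right (norm_nonneg _))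

variable {n : ℕ}

def chainLength (x : E) (y : Fin (n + 1) → E) : ℝ :=
  ‖x - y 0‖ + ∑ k : Fin n, ‖y k.castSucc - y k.succ‖

lemma norm_sub_le_chainLength (x : E) (y : Fin (n + 1) → E) (i : Fin (n + 1)) :
    ‖y i - x‖ ≤ chainLength x y := by
  have h := norm_sub_zero_le_sum_norm_sub (Fin.cons x y : Fin (n + 2) → E) i.succ
  simp only [Fin.sum_univ_succ, Fin.castSucc_zero, ← Fin.succ_castSucc, Fin.cons_succ,
    Fin.cons_zero] at h
  simpa [chainLength, norm_sub_rev] using h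

lemma sum_norm_sub_le_chainLength (x : E) (y : Fin (n + 1) → E) :
    ∑ i, ‖y i - x‖ ≤ (n + 1) * chainLength x y := by
  calc ∑ i, ‖y i - x‖ ≤ ∑ _i : Fin (n + 1), chainLength x y :=
        Finset.sum_le_sum fun i _ => norm_sub_le_chainLength x y i
    _ = (n + 1) * chainLength x y := by simp

def loopProduct (t : Fin (n + 2) → E → E → ℂ) (x : E) (y : Fin (n + 1) → E) : ℂ :=
  t 0 x (y 0) * (∏ k : Fin n, t k.succ.castSucc (y k.castSucc) (y k.succ)) *
    t (Fin.last (n + 1)) (y (Fin.last n)) x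

lemma norm_loopProduct_le {t : Fin (n + 2) → E → E → ℂ} {s : Set E} {C α : ℝ}
    (hC : 0 ≤ C) (hα : 0 ≤ α)
    (ht : ∀ i, ∀ x ∈ s, ∀ x' ∈ s, ‖t i x x'‖ ≤ C * exp (-α * ‖x - x'‖))
    {x : E} (hx : x ∈ s) {y : Fin (n + 1) → E} (hy : ∀ i, y i ∈ s) :
    ‖loopProduct t x y‖ ≤ C ^ (n + 2) * exp (-(α * chainLength x y)) := by
  have hlast : ‖t (Fin.last (n + 1)) (y (Fin.last n)) x‖ ≤ C :=
    (ht _ _ (hy _) _ hx).trans (mul_le_of_le_one_right hC (exp_le_one_iff.2 (by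
      nlinarith [norm_nonneg (y (Fin.last n) - x)])))
  have hmiddle : ∏ k : Fin n, ‖t k.succ.castSucc (y k.castSucc) (y k.succ)‖ ≤
      ∏ k : Fin n, C * exp (-α * ‖y k.castSucc - y k.succ‖) :=
    Finset.prod_le_prod (fun _ _ => norm_nonneg _) fun k _ => ht _ _ (hy _) _ (hy _)
  calc ‖loopProduct t x y‖
      ≤ C * exp (-α * ‖x - y 0‖) *
          (∏ k : Fin n, C * exp (-α * ‖y k.castSucc - y k.succ‖)) * C := by
        simp only [loopProduct, norm_mul, norm_prod]
        gcongr
        exact ht _ _ hx _ (hy _)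
    _ = C ^ (n + 2) * exp (-(α * chainLength x y)) := by
        rw [Finset.prod_mul_distrib, Finset.prod_const, Finset.card_univ, Fintype.card_fin,
          ← exp_sum, chainLength, mul_add, Finset.mul_sum]
        simp only [neg_add, exp_add, ← Finset.sum_neg_distrib, neg_mul]
        ring

end Chain

lemma pow_mul_exp_neg_le (k : ℕ) {c s : ℝ} (hc : 0 < c) (hs : 0 ≤ s) :
    s ^ k * exp (-(c * s)) ≤ k.factorial * (2 / c) ^ k * exp (-(c / 2 * s)) := by
  have hpow : (c / 2 * s) ^ k ≤ k.factorial * exp (c / 2 * s) := by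
    have h := pow_div_factorial_le_exp (x := c / 2 * s) (by positivity) k
    rwa [div_le_iff₀ (by positivity), mul_comm (exp _)] at h
  calc s ^ k * exp (-(c * s))
      = (2 / c) ^ k * (c / 2 * s) ^ k * exp (-(c * s)) := by
        rw [← mul_pow]; field_simp
    _ ≤ (2 / c) ^ k * (k.factorial * exp (c / 2 * s)) * exp (-(c * s)) := by gcongr
    _ = k.factorial * (2 / c) ^ k * exp (-(c / 2 * s)) := by
        rw [mul_assoc, mul_assoc, ← exp_add]; ring_nf

section Integrals

variable {E : Type*} [NormedAddCommGroup E] [NormedSpace ℝ E] [FiniteDimensional ℝ E]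

lemma integrable_exp_neg_mul_norm [MeasurableSpace E] [BorelSpace E] [Nontrivial E]
    (μ : Measure E) [μ.IsAddHaarMeasure] {b : ℝ} (hb : 0 < b) :
    Integrable (fun u => exp (-(b * ‖u‖))) μ := by
  rw [integrable_fun_norm_addHaar μ (f := fun r => exp (-(b * r)))]
  refine (integrableOn_rpow_mul_exp_neg_mul_rpow (s := (Module.finrank ℝ E - 1 : ℕ))
    (neg_one_lt_zero.trans_le (Nat.cast_nonneg _)) one_pos hb).congr_fun (fun r _ => ?_)
    measurableSet_Ioi
  simp [rpow_natCast]

variable [MeasureSpace E] [BorelSpace E] [(volume : Measure E).IsAddHaarMeasure]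

lemma integrable_prod_exp_neg_mul_norm_sub [Nontrivial E] (k : ℕ) {b : ℝ} (hb : 0 < b) (x : E) :
    Integrable fun y : Fin k → E => ∏ i, exp (-(b * ‖y i - x‖)) :=
  Integrable.fintype_prod (f := fun _ u => exp (-(b * ‖u - x‖)))
    fun _ => (integrable_exp_neg_mul_norm volume hb).comp_sub_right x

lemma integral_prod_exp_neg_mul_norm_sub (k : ℕ) (b : ℝ) (x : E) :
    ∫ y : Fin k → E, ∏ i, exp (-(b * ‖y i - x‖)) = (∫ u : E, exp (-(b * ‖u‖))) ^ k := by
  rw [integral_fintype_prod_volume_eq_pow (fun u => exp (-(b * ‖u - x‖))),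
    integral_sub_right_eq_self (fun u => exp (-(b * ‖u‖))) x, Fintype.card_fin]

end Integrals

lemma norm_setIntegral_le_integral_of_norm_le {X F : Type*} [MeasurableSpace X]
    [NormedAddCommGroup F] [NormedSpace ℝ F] {μ : Measure X} {f : X → F} {g : X → ℝ}
    {s : Set X} (hs : MeasurableSet s) (hg : Integrable g μ) (hg0 : 0 ≤ g)
    (h : ∀ x ∈ s, ‖f x‖ ≤ g x) :
    ‖∫ x in s, f x ∂μ‖ ≤ ∫ x, g x ∂μ :=
  (norm_integral_le_of_norm_le hg.integrableOn ((ae_restrict_iff' hs).2 (.of_forall h))).trans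
    (setIntegral_le_integral hg (.of_forall hg0))

local notation "ℝ³" => EuclideanSpace ℝ (Fin 3)

lemma abs_phi_le (a b : ℝ³) : |phi a b| ≤ ‖a‖ * ‖b‖ := by
  have hcoord (u v : ℝ³) (i j : Fin 3) : |u i * v j| ≤ ‖u‖ * ‖v‖ := by
    rw [abs_mul]
    exact mul_le_mul (PiLp.norm_apply_le u i) (PiLp.norm_apply_le v j) (abs_nonneg _)
      (norm_nonneg _)
  rw [phi, abs_div, abs_two]
  linarith [abs_sub (a 1 * b 0) (a 0 * b 1), hcoord a b 1 0, hcoord a b 0 1]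

lemma phi_sub_sub (a b x : ℝ³) : phi (a - x) (b - x) = phi a b + (phi b x - phi a x) := by
  simp only [phi, PiLp.sub_apply]
  ring

lemma fln_eq_sum_phi_sub (n : ℕ) (x : ℝ³) (y : Fin (n + 1) → ℝ³) :
    fln n x y = ∑ k : Fin n, phi (y k.castSucc - x) (y k.succ - x) := by
  simp only [phi_sub_sub, Finset.sum_add_distrib,
    Fin.sum_succ_sub_castSucc (fun i => phi (y i) x), fln]
  simp only [phi]
  ring

lemma abs_fln_le (n : ℕ) (x : ℝ³) (y : Fin (n + 1) → ℝ³) :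
    |fln n x y| ≤ (∑ i, ‖y i - x‖) ^ 2 := by
  set T := ∑ i, ‖y i - x‖
  have hT : 0 ≤ T := Finset.sum_nonneg fun _ _ => norm_nonneg _
  have hcast : ∑ k : Fin n, ‖y k.castSucc - x‖ ≤ T := by
    simp only [T, Fin.sum_univ_castSucc (f := fun i => ‖y i - x‖)]
    exact le_add_of_nonneg_right (norm_nonneg _)
  rw [fln_eq_sum_phi_sub]
  calc |∑ k : Fin n, phi (y k.castSucc - x) (y k.succ - x)|
      ≤ ∑ k : Fin n, ‖y k.castSucc - x‖ * T := by
        refine (Finset.abs_sum_le_sum_abs _ _).trans (Finset.sum_le_sum fun k _ => ?_)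
        refine (abs_phi_le _ _).trans (mul_le_mul_of_nonneg_left ?_ (norm_nonneg _))
        exact Finset.single_le_sum (f := fun i => ‖y i - x‖) (fun _ _ => norm_nonneg _)
          (Finset.mem_univ _)
    _ ≤ T * T := by rw [← Finset.sum_mul]; gcongr
    _ = T ^ 2 := (sq T).symm

lemma norm_fluxIntegrand_le {n : ℕ} {t : Fin (n + 2) → ℝ³ → ℝ³ → ℂ} {s : Set ℝ³} {C α β : ℝ}
    (hC : 0 ≤ C) (hβ : 0 < β) (hβα : (n + 1) * β ≤ α)
    (ht : ∀ i, ∀ x ∈ s, ∀ x' ∈ s, ‖t i x x'‖ ≤ C * exp (-α * ‖x - x'‖))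
    (m : ℕ) {x : ℝ³} (hx : x ∈ s) {y : Fin (n + 1) → ℝ³} (hy : ∀ i, y i ∈ s) :
    ‖(Complex.I * (fln n x y : ℝ)) ^ m * loopProduct t x y‖ ≤
      C ^ (n + 2) * ((2 * m).factorial * (2 / β) ^ (2 * m)) * ∏ i, exp (-(β / 2 * ‖y i - x‖)) := by
  set T := ∑ i, ‖y i - x‖
  have hT : 0 ≤ T := Finset.sum_nonneg fun _ _ => norm_nonneg _
  have hphase : ‖(Complex.I * (fln n x y : ℝ)) ^ m‖ ≤ T ^ (2 * m) := by
    rw [norm_pow, norm_mul, Complex.norm_I, one_mul, Complex.norm_real, Real.norm_eq_abs,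
      pow_mul]
    exact pow_le_pow_left₀ (abs_nonneg _) (abs_fln_le n x y) m
  have hdecay : exp (-(α * chainLength x y)) ≤ exp (-(β * T)) := by
    have hS : 0 ≤ chainLength x y := (norm_nonneg _).trans (norm_sub_le_chainLength x y 0)
    rw [exp_le_exp, neg_le_neg_iff]
    calc β * T ≤ β * ((n + 1) * chainLength x y) :=
          mul_le_mul_of_nonneg_left (sum_norm_sub_le_chainLength x y) hβ.le
      _ = (n + 1) * β * chainLength x y := by ring
      _ ≤ α * chainLength x y := mul_le_mul_of_nonneg_right hβα hS
  have hα : 0 ≤ α := le_trans (by positivity) hβα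
  calc ‖(Complex.I * (fln n x y : ℝ)) ^ m * loopProduct t x y‖
      ≤ T ^ (2 * m) * (C ^ (n + 2) * exp (-(β * T))) := by
        rw [norm_mul]
        gcongr
        exact (norm_loopProduct_le hC hα ht hx hy).trans (by gcongr)
    _ = C ^ (n + 2) * (T ^ (2 * m) * exp (-(β * T))) := by ring
    _ ≤ C ^ (n + 2) * ((2 * m).factorial * (2 / β) ^ (2 * m) * exp (-(β / 2 * T))) :=
        mul_le_mul_of_nonneg_left (pow_mul_exp_neg_le _ hβ hT) (by positivity)
    _ = _ := by
        rw [← exp_sum, Finset.mul_sum, ← Finset.sum_neg_distrib]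
        ring

lemma isOpen_cube (L : ℝ) : IsOpen (cube L) := by
  simp only [cube, Set.ofPred_forall]
  exact isOpen_iInter_of_finite fun i => isOpen_Ioo.preimage (PiLp.continuous_apply 2 _ i)

lemma volume_cube (L : ℝ) : volume (cube L) = ENNReal.ofReal L ^ 3 := by
  have : cube L = (MeasurableEquiv.toLp 2 (Fin 3 → ℝ)).symm ⁻¹'
      Set.pi Set.univ fun _ => Set.Ioo (-(L / 2)) (L / 2) := by
    ext x
    simp [cube, MeasurableEquiv.coe_toLp_symm, Set.mem_pi]
  rw [this,
    (EuclideanSpace.volume_preserving_symm_measurableEquiv_toLp (Fin 3)).measure_preimage_equiv,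
    volume_pi_pi, Real.volume_Ioo, sub_neg_eq_add, add_halves]
  simp

/-- For kernels `t₀,…,t_{n+1}` bounded by `C e^{−α|x−x'|}` on `Λ × Λ`, the quantity
`d_{m,n+1}(L) = ∫_Λ dx ∫_{Λ^{n+1}} dy (i fl_{n+1}(x,y))^m t₀(x,y₁) t₁(y₁,y₂) ⋯
t_{n+1}(y_{n+1},x)` satisfies `|d_{m,n+1}(L)| ≤ K L³` with `K` depending only on
`C, α, m, n` (independent of `L` and of the kernels). This covers every number
`n+1 ≥ 1` of intermediate points. -/
theorem volume_bound_flux_integral (C α : ℝ) (hC : 0 < C) (hα : 0 < α)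
    (m n : ℕ) :
    ∃ K : ℝ, 0 < K ∧ ∀ L : ℝ, 1 < L →
      ∀ t : Fin (n + 2) → EuclideanSpace ℝ (Fin 3) → EuclideanSpace ℝ (Fin 3) → ℂ,
        (∀ i, Measurable (Function.uncurry (t i))) →
        (∀ i, ∀ x ∈ cube L, ∀ x' ∈ cube L,
          ‖t i x x'‖ ≤ C * Real.exp (-α * ‖x - x'‖)) →
        ‖∫ x in cube L,
            ∫ y in Set.pi Set.univ (fun _ : Fin (n + 1) => cube L),
              (Complex.I * (fln n x y : ℝ)) ^ m *
                (t 0 x (y 0) *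
                  (∏ k : Fin n, t k.succ.castSucc (y k.castSucc) (y k.succ)) *
                  t (Fin.last (n + 1)) (y (Fin.last n)) x)‖ ≤ K * L ^ 3 := by
  set β := α / (n + 1)
  have hβ : 0 < β := by positivity
  set D := C ^ (n + 2) * ((2 * m).factorial * (2 / β) ^ (2 * m)) *
    (∫ u : ℝ³, exp (-(β / 2 * ‖u‖))) ^ (n + 1)
  have hD : 0 ≤ D := by positivity
  refine ⟨D + 1, by positivity, fun L hL t _ ht => ?_⟩
  have hinner (x : ℝ³) (hx : x ∈ cube L) :
      ‖∫ y in Set.pi Set.univ (fun _ : Fin (n + 1) => cube L),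
        (Complex.I * (fln n x y : ℝ)) ^ m * loopProduct t x y‖ ≤ D := by
    refine (norm_setIntegral_le_integral_of_norm_le
      (.univ_pi fun _ => (isOpen_cube L).measurableSet)
      ((integrable_prod_exp_neg_mul_norm_sub _ (half_pos hβ) x).const_mul _)
      (fun y => by positivity)
      fun y hy => norm_fluxIntegrand_le hC.le hβ (mul_div_cancel₀ α (by positivity)).le ht m hx
        fun i => hy i (Set.mem_univ i)).trans_eq ?_
    rw [integral_const_mul, integral_prod_exp_neg_mul_norm_sub]
  calc _ ≤ D * volume.real (cube L) :=
        norm_setIntegral_le_of_norm_le_const (by simp [volume_cube]) hinner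
    _ = D * L ^ 3 := by
        rw [measureReal_def, volume_cube, ENNReal.toReal_pow, ENNReal.toReal_ofReal (by linarith)]
    _ ≤ (D + 1) * L ^ 3 := by gcongr; linarith
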